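/- arXiv:2210.02146 — 3 statements merged into one kernel-verified Lean document; each statement's English description precedes it below -/
import Mathlib

section
/- Let C be a centralic category, let f, g : X → Y be central morphisms with cooperators ρ_f, ρ_g : X × Y → Y for f with 1_Y and g with 1_Y respectively, and let h : X → Y be any morphism. Then the action f ⋆ g := ρ_f ∘ ⟨1_X, g⟩ is associative and unital: (f ⋆ g) ⋆ h = f ⋆ (g ⋆ h) (where f ⋆ g, being central, acts via its cooperator with 1_Y), and 0 ⋆ h = h where 0 : X → Y is the zero morphism (which is central with cooperator the second projection π₂ : X × Y → Y). -/
open CategoryTheory CategoryTheory.Limits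

universe v u

/-- A pointed category with binary products is *centralic*. -/
def Centralic (C : Type u) [Category.{v} C] [HasZeroObject C] [HasZeroMorphisms C]
    [HasBinaryProducts C] : Prop :=
  ∀ ⦃X Y Z S : C⦄ (f : X ⨯ Y ⟶ Z) (x x' : S ⟶ X) (y : S ⟶ Y),
    prod.lift x 0 ≫ f = prod.lift x' 0 ≫ f →
    prod.lift x y ≫ f = prod.lift x' y ≫ f

/-- `ρ : A ⨯ B ⟶ X` is a cooperator for `f : A ⟶ X` and `g : B ⟶ X`. -/
def IsCooperator {C : Type u} [Category.{v} C] [HasZeroObject C] [HasZeroMorphisms C]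
    [HasBinaryProducts C] {A B X : C} (f : A ⟶ X) (g : B ⟶ X) (ρ : A ⨯ B ⟶ X) : Prop :=
  prod.lift (𝟙 A) 0 ≫ ρ = f ∧ prod.lift 0 (𝟙 B) ≫ ρ = g

/-- Two morphisms with common codomain commute if they admit a cooperator. -/
def Commutes {C : Type u} [Category.{v} C] [HasZeroObject C] [HasZeroMorphisms C]
    [HasBinaryProducts C] {A B X : C} (f : A ⟶ X) (g : B ⟶ X) : Prop :=
  ∃ ρ : A ⨯ B ⟶ X, IsCooperator f g ρ

/-- A morphism `f : A ⟶ B` is central if it commutes with `𝟙 B`. -/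
def Central {C : Type u} [Category.{v} C] [HasZeroObject C] [HasZeroMorphisms C]
    [HasBinaryProducts C] {A B : C} (f : A ⟶ B) : Prop :=
  Commutes f (𝟙 B)

/-!
In a centralic category the cooperator of a morphism with an identity is unique. Since
`⟨π₁, ρ_g⟩ ≫ ρ_f` is a cooperator for `f ⋆ g` with `𝟙 Y`, it must be `ρ_{f ⋆ g}`, and
precomposing with `⟨1_X, h⟩` gives associativity.
-/

section

variable {C : Type u} [Category.{v} C] [HasZeroObject C] [HasZeroMorphisms C]
  [HasBinaryProducts C]

namespace IsCooperator

lemma lift_zero_comp {A B X S : C} {f : A ⟶ X} {g : B ⟶ X} {ρ : A ⨯ B ⟶ X}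
    (hρ : IsCooperator f g ρ) (s : S ⟶ A) : prod.lift s 0 ≫ ρ = s ≫ f := by
  rw [← hρ.1, ← Category.assoc, prod.comp_lift, Category.comp_id, comp_zero]

lemma zero_lift_comp {A B X S : C} {f : A ⟶ X} {g : B ⟶ X} {ρ : A ⨯ B ⟶ X}
    (hρ : IsCooperator f g ρ) (t : S ⟶ B) : prod.lift 0 t ≫ ρ = t ≫ g := by
  rw [← hρ.2, ← Category.assoc, prod.comp_lift, Category.comp_id, comp_zero]

/-- Apply centralicity to `((a, b), y) ↦ ρ (a, ρ' (b, y))`: at `y = 0` both `((a, 0), y)` and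
`((0, a), y)` give `k a`, and at general `y` they give `ρ (a, y)` and `ρ' (a, y)`. -/
lemma eq_of_centralic (hC : Centralic C) {X Y : C} {k : X ⟶ Y} {ρ ρ' : X ⨯ Y ⟶ Y}
    (hρ : IsCooperator k (𝟙 Y) ρ) (hρ' : IsCooperator k (𝟙 Y) ρ') : ρ = ρ' := by
  let F : (X ⨯ X) ⨯ Y ⟶ Y := prod.lift (prod.fst ≫ prod.fst) (prod.map prod.snd (𝟙 Y) ≫ ρ') ≫ ρ
  have hF : ∀ {S : C} (a b : S ⟶ X) (y : S ⟶ Y),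
      prod.lift (prod.lift a b) y ≫ F = prod.lift a (prod.lift b y ≫ ρ') ≫ ρ := by
    intro S a b y
    rw [← Category.assoc, prod.comp_lift, prod.lift_fst_assoc, prod.lift_fst, prod.lift_map_assoc,
      prod.lift_snd, Category.comp_id]
  have hgen := hC F (prod.lift prod.fst 0) (prod.lift 0 prod.fst) (prod.snd : X ⨯ Y ⟶ Y) (by
    rw [hF, hF, hρ'.zero_lift_comp, zero_comp, hρ'.lift_zero_comp, hρ.lift_zero_comp,
      hρ.zero_lift_comp, Category.comp_id])
  rwa [hF, hF, hρ'.zero_lift_comp, hρ.zero_lift_comp, Category.comp_id, Category.comp_id,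
    prod.lift_fst_snd, Category.id_comp, Category.id_comp] at hgen

end IsCooperator

lemma isCooperator_lift_fst_comp {X Y : C} {f g : X ⟶ Y} {ρf ρg : X ⨯ Y ⟶ Y}
    (hρf : IsCooperator f (𝟙 Y) ρf) (hρg : IsCooperator g (𝟙 Y) ρg) :
    IsCooperator (prod.lift (𝟙 X) g ≫ ρf) (𝟙 Y) (prod.lift prod.fst ρg ≫ ρf) := by
  constructor
  · rw [← Category.assoc, prod.comp_lift, prod.lift_fst, hρg.1]
  · rw [← Category.assoc, prod.comp_lift, prod.lift_fst, hρg.2, hρf.2]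

end

/-- The action `f ⋆ g := ρ_f ∘ ⟨1_X, g⟩` is associative and unital. -/
theorem stmt9 (C : Type u) [Category.{v} C] [HasZeroObject C] [HasZeroMorphisms C]
    [HasBinaryProducts C] (hC : Centralic C)
    {X Y : C} (f g : X ⟶ Y) (h : X ⟶ Y) (ρf ρg : X ⨯ Y ⟶ Y)
    (hρf : IsCooperator f (𝟙 Y) ρf) (hρg : IsCooperator g (𝟙 Y) ρg) :
    (∀ ρfg : X ⨯ Y ⟶ Y, IsCooperator (prod.lift (𝟙 X) g ≫ ρf) (𝟙 Y) ρfg →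
      -- (f ⋆ g) ⋆ h = f ⋆ (g ⋆ h)
      prod.lift (𝟙 X) h ≫ ρfg = prod.lift (𝟙 X) (prod.lift (𝟙 X) h ≫ ρg) ≫ ρf) ∧
      -- 0 ⋆ h = h, where `0 : X ⟶ Y` is central with cooperator `π₂`
      (IsCooperator (0 : X ⟶ Y) (𝟙 Y) (prod.snd : X ⨯ Y ⟶ Y) ∧
        prod.lift (𝟙 X) h ≫ (prod.snd : X ⨯ Y ⟶ Y) = h) := by
  refine ⟨fun ρfg hρfg => ?_, ⟨prod.lift_snd _ _, prod.lift_snd _ _⟩, prod.lift_snd _ _⟩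
  rw [hρfg.eq_of_centralic hC (isCooperator_lift_fst_comp hρf hρg), ← Category.assoc,
    prod.comp_lift, prod.lift_fst]
end

section
/- Let C be a finitely complete centralic category in which regular epimorphisms are stable under binary products. If f : A → Y is central and q : Y → Q is a regular epimorphism, then q ∘ f is central. -/
open CategoryTheory CategoryTheory.Limits

universe v u

/-- `q : X ⟶ Q` is a coequalizer of `u v : A ⟶ X`. -/
def IsCoequalizerDiagram {C : Type u} [Category.{v} C] {A X Q : C}
    (u v : A ⟶ X) (q : X ⟶ Q) : Prop :=
  u ≫ q = v ≫ q ∧ ∀ ⦃Z : C⦄ (h : X ⟶ Z), u ≫ h = v ≫ h → ∃! t : Q ⟶ Z, q ≫ t = h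

/-- A morphism is a regular epimorphism if it is the coequalizer of some pair. -/
def IsRegularEpimorphism {C : Type u} [Category.{v} C] {X Q : C} (q : X ⟶ Q) : Prop :=
  ∃ (A : C) (u v : A ⟶ X), IsCoequalizerDiagram u v q

/-- Regular epimorphisms are stable under binary products. -/
def RegularEpisStableUnderProducts (C : Type u) [Category.{v} C] [HasBinaryProducts C] : Prop :=
  ∀ ⦃X₁ Q₁ X₂ Q₂ : C⦄ (q₁ : X₁ ⟶ Q₁) (q₂ : X₂ ⟶ Q₂),
    IsRegularEpimorphism q₁ → IsRegularEpimorphism q₂ →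
    IsRegularEpimorphism (prod.map q₁ q₂)

/-!
Let `ρ : A ⨯ Y ⟶ Y` be a cooperator for `f` and `𝟙 Y`. Since `𝟙 A × q` is a regular epimorphism,
it suffices to show that `ρ ≫ q` coequalizes any pair `u, v` that `𝟙 A × q` coequalizes; the
induced map `A ⨯ Q ⟶ Q` is then a cooperator for `f ≫ q` and `𝟙 Q`, because `q` is epic.
Such `u, v` share their first component and have second components identified by `q`, so they
agree after `⟨0, 𝟙 Y⟩ ≫ ρ ≫ q = q`; the centralic property transports this equality from
first component `0` to their common first component.
-/

section

variable {C : Type u} [Category.{v} C]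

theorem IsRegularEpimorphism.epi {X Q : C} {q : X ⟶ Q} (hq : IsRegularEpimorphism q) :
    Epi q where
  left_cancellation a b hab := by
    obtain ⟨_, u, v, huv, hcoeq⟩ := hq
    obtain ⟨_, _, hunique⟩ := hcoeq (q ≫ a) (by rw [reassoc_of% huv])
    exact (hunique a rfl).trans (hunique b hab.symm).symm

theorem isRegularEpimorphism_id (X : C) : IsRegularEpimorphism (𝟙 X) :=
  ⟨X, 𝟙 X, 𝟙 X, rfl, fun _ h _ => ⟨h, by simp, fun t ht => by simpa using ht⟩⟩

variable [HasZeroObject C] [HasZeroMorphisms C] [HasBinaryProducts C]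

theorem Centralic.lift_comp_eq_of_snd (hC : Centralic C) {X Y Z S : C} (g : X ⨯ Y ⟶ Z)
    (x : S ⟶ X) {y y' : S ⟶ Y} (h : prod.lift 0 y ≫ g = prod.lift 0 y' ≫ g) :
    prod.lift x y ≫ g = prod.lift x y' ≫ g := by
  have swap : ∀ (a : S ⟶ Y) (b : S ⟶ X),
      prod.lift a b ≫ (prod.lift prod.snd prod.fst : Y ⨯ X ⟶ X ⨯ Y) = prod.lift b a := fun _ _ => by
    ext <;> simp only [Category.assoc, prod.lift_fst, prod.lift_snd]
  simpa only [reassoc_of% swap] using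
    hC (prod.lift prod.snd prod.fst ≫ g) y y' x (by simpa only [reassoc_of% swap] using h)

theorem Centralic.comp_eq_of_comp_prodMap_eq (hC : Centralic C) {A B Y Q Z : C} {q : Y ⟶ Q}
    {u v : B ⟶ A ⨯ Y} (huv : u ≫ prod.map (𝟙 A) q = v ≫ prod.map (𝟙 A) q)
    (g : A ⨯ Y ⟶ Z) (k : Q ⟶ Z) (hg : prod.lift 0 (𝟙 Y) ≫ g = q ≫ k) :
    u ≫ g = v ≫ g := by
  have hfst : u ≫ prod.fst = v ≫ prod.fst := by simpa using huv =≫ prod.fst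
  have hsnd : u ≫ prod.snd ≫ q = v ≫ prod.snd ≫ q := by simpa using huv =≫ prod.snd
  have hzero : ∀ y : B ⟶ Y, prod.lift 0 y ≫ g = y ≫ q ≫ k := fun y => by
    rw [← hg, ← Category.assoc, prod.comp_lift]; simp
  have eta : ∀ w : B ⟶ A ⨯ Y, prod.lift (w ≫ prod.fst) (w ≫ prod.snd) = w := fun w => by
    rw [← prod.comp_lift, prod.lift_fst_snd, Category.comp_id]
  calc u ≫ g = prod.lift (u ≫ prod.fst) (u ≫ prod.snd) ≫ g := by rw [eta]
    _ = prod.lift (u ≫ prod.fst) (v ≫ prod.snd) ≫ g :=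
      hC.lift_comp_eq_of_snd g _ (by simp only [hzero, Category.assoc, reassoc_of% hsnd])
    _ = v ≫ g := by rw [hfst, eta]

theorem IsCooperator.of_prodMap_comp {A Y Q : C} {f : A ⟶ Y} {ρ : A ⨯ Y ⟶ Y}
    (hρ : IsCooperator f (𝟙 Y) ρ) (q : Y ⟶ Q) [Epi q] {σ : A ⨯ Q ⟶ Q}
    (hσ : prod.map (𝟙 A) q ≫ σ = ρ ≫ q) : IsCooperator (f ≫ q) (𝟙 Q) σ := by
  obtain ⟨hρ₁, hρ₂⟩ := hρ
  constructor
  · have e : prod.lift (𝟙 A) (0 : A ⟶ Q) = prod.lift (𝟙 A) 0 ≫ prod.map (𝟙 A) q := by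
      ext <;> simp
    rw [e, Category.assoc, hσ, reassoc_of% hρ₁]
  · have e : q ≫ prod.lift (0 : Q ⟶ A) (𝟙 Q) = prod.lift 0 (𝟙 Y) ≫ prod.map (𝟙 A) q := by
      ext <;> simp
    rw [← cancel_epi q, reassoc_of% e, hσ, reassoc_of% hρ₂, Category.comp_id]

end

/-- Postcomposition of a central morphism with a regular epi is central. -/
theorem stmt14 (C : Type u) [Category.{v} C] [HasZeroObject C] [HasZeroMorphisms C]
    [HasFiniteLimits C] (hC : Centralic C)
    (hstab : RegularEpisStableUnderProducts C)
    {A Y Q : C} (f : A ⟶ Y) (hf : Central f)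
    (q : Y ⟶ Q) (hq : IsRegularEpimorphism q) :
    Central (f ≫ q) := by
  obtain ⟨ρ, hρ⟩ := hf
  have := hq.epi
  obtain ⟨_, u, v, huv, hcoeq⟩ := hstab (𝟙 A) q (isRegularEpimorphism_id A) hq
  have hρq : prod.lift 0 (𝟙 Y) ≫ ρ ≫ q = q ≫ 𝟙 Q := by
    rw [reassoc_of% hρ.2, Category.comp_id]
  obtain ⟨σ, hσ, _⟩ := hcoeq (ρ ≫ q) (hC.comp_eq_of_comp_prodMap_eq huv (ρ ≫ q) (𝟙 Q) hρq)
  exact ⟨σ, hρ.of_prodMap_comp q hσ⟩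
end

section
/- Let C be a centralic category, let (X, ρ_X) and (Y, ρ_Y) be internal unitary magmas in C (i.e., ρ_X : X × X → X satisfies ρ_X ∘ ⟨1_X,0⟩ = 1_X = ρ_X ∘ ⟨0,1_X⟩, and similarly for ρ_Y). Then every morphism f : X → Y is a homomorphism of unitary magmas: f ∘ ρ_X = ρ_Y ∘ (f × f). -/
open CategoryTheory CategoryTheory.Limits

universe v u

section

variable {C : Type u} [Category.{v} C] [HasZeroObject C] [HasZeroMorphisms C]
  [HasBinaryProducts C]

theorem IsCooperator.lift_zero_comp_s16 {A B X : C} {f : A ⟶ X} {g : B ⟶ X} {ρ : A ⨯ B ⟶ X}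
    (hρ : IsCooperator f g ρ) {S : C} (a : S ⟶ A) : prod.lift a 0 ≫ ρ = a ≫ f := by
  rw [← hρ.1, ← Category.assoc, prod.comp_lift, Category.comp_id, comp_zero]

theorem IsCooperator.zero_lift_comp_s16 {A B X : C} {f : A ⟶ X} {g : B ⟶ X} {ρ : A ⨯ B ⟶ X}
    (hρ : IsCooperator f g ρ) {S : C} (b : S ⟶ B) : prod.lift 0 b ≫ ρ = b ≫ g := by
  rw [← hρ.2, ← Category.assoc, prod.comp_lift, Category.comp_id, comp_zero]

/- With `σ((c, d), e) = ρY (f (ρX (e, c)), f d)`, both `σ((b, 0), a)` and `σ((0, b), a)` equal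
`f b` when `a = 0`; centrality carries this to arbitrary `a`, where they are the two sides. -/
theorem Centralic.lift_comp_comp_eq {X Y : C} (hC : Centralic C) {ρX : X ⨯ X ⟶ X}
    {ρY : Y ⨯ Y ⟶ Y} (hX : IsCooperator (𝟙 X) (𝟙 X) ρX) (hY : IsCooperator (𝟙 Y) (𝟙 Y) ρY)
    (f : X ⟶ Y) {S : C} (a b : S ⟶ X) :
    prod.lift a b ≫ ρX ≫ f = prod.lift (a ≫ f) (b ≫ f) ≫ ρY := by
  set σ : (X ⨯ X) ⨯ X ⟶ Y :=
    prod.lift (prod.lift prod.snd (prod.fst ≫ prod.fst) ≫ ρX ≫ f) (prod.fst ≫ prod.snd ≫ f) ≫ ρY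
  have hσ (c d e : S ⟶ X) :
      prod.lift (prod.lift c d) e ≫ σ = prod.lift ((prod.lift e c ≫ ρX) ≫ f) (d ≫ f) ≫ ρY := by
    simp only [σ, ← Category.assoc, prod.comp_lift, prod.lift_fst, prod.lift_snd]
  have at_zero : prod.lift (prod.lift b 0) 0 ≫ σ = prod.lift (prod.lift 0 b) 0 ≫ σ := by
    simp only [hσ, hX.lift_zero_comp_s16, hX.zero_lift_comp_s16, hY.lift_zero_comp_s16, hY.zero_lift_comp_s16,
      zero_comp, Category.comp_id]
  simpa only [hσ, hX.lift_zero_comp_s16, hX.zero_lift_comp_s16, hY.lift_zero_comp_s16, zero_comp,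
    Category.comp_id, Category.assoc] using hC σ _ _ a at_zero

end

/-- Any morphism between internal unitary magmas is a magma homomorphism. -/
theorem stmt16 (C : Type u) [Category.{v} C] [HasZeroObject C] [HasZeroMorphisms C]
    [HasBinaryProducts C] (hC : Centralic C)
    {X Y : C} (ρX : X ⨯ X ⟶ X) (ρY : Y ⨯ Y ⟶ Y)
    (hX₁ : prod.lift (𝟙 X) 0 ≫ ρX = 𝟙 X) (hX₂ : prod.lift 0 (𝟙 X) ≫ ρX = 𝟙 X)
    (hY₁ : prod.lift (𝟙 Y) 0 ≫ ρY = 𝟙 Y) (hY₂ : prod.lift 0 (𝟙 Y) ≫ ρY = 𝟙 Y)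
    (f : X ⟶ Y) :
    ρX ≫ f = prod.map f f ≫ ρY := by
  simpa using hC.lift_comp_comp_eq ⟨hX₁, hX₂⟩ ⟨hY₁, hY₂⟩ f prod.fst prod.snd
end
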